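/- (Proposition 2.) Define α̂₀ : ℝ → ℝ by α̂₀(ρ) = Φ(ρ)·(1 − ρ·Φ(−ρ)/φ(ρ)). Then for every ρ ∈ ℝ, α̂₀ is differentiable at ρ with derivative dα̂₀(ρ)/dρ = ( (f + p·ρ)·(f − q·ρ) − q·p ) / f, where p = Φ(ρ), q = Φ(−ρ), and f = φ(ρ). -/

import Mathlib

open MeasureTheory ProbabilityTheory

/-- The standard normal density φ(t) = (2π)^{-1/2} e^{-t²/2}. -/
noncomputable def stdNormalPDF (t : ℝ) : ℝ :=
  (Real.sqrt (2 * Real.pi))⁻¹ * Real.exp (-t ^ 2 / 2)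

/-- The standard normal distribution function Φ(x) = ∫_{-∞}^x φ(t) dt. -/
noncomputable def stdNormalCDF (x : ℝ) : ℝ :=
  ∫ t in Set.Iic x, stdNormalPDF t

/-- The estimate α̂₀ of the optimal acceptance threshold as a function of the
adjusted mean ρ of the environment. -/
noncomputable def optThreshold (ρ : ℝ) : ℝ :=
  stdNormalCDF ρ * (1 - ρ * stdNormalCDF (-ρ) / stdNormalPDF ρ)

theorem hasDerivAt_integral_Iic {E : Type*} [NormedAddCommGroup E] [NormedSpace ℝ E]
    [CompleteSpace E] {f : ℝ → E} {x : ℝ} (hf : Integrable f) (hfx : ContinuousAt f x) :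
    HasDerivAt (fun y => ∫ t in Set.Iic y, f t) (f x) x := by
  have hsplit : (fun y => ∫ t in Set.Iic y, f t) =
      fun y => (∫ t in Set.Iic 0, f t) + ∫ t in (0 : ℝ)..y, f t := by
    funext y
    rw [← intervalIntegral.integral_Iic_sub_Iic hf.integrableOn hf.integrableOn, add_sub_cancel]
  rw [hsplit]
  exact (intervalIntegral.integral_hasDerivAt_right hf.intervalIntegrable
    hf.aestronglyMeasurable.stronglyMeasurableAtFilter hfx).const_add _

theorem stdNormalPDF_eq_gaussianPDFReal : stdNormalPDF = gaussianPDFReal 0 1 := by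
  funext t
  simp [stdNormalPDF, gaussianPDFReal]

theorem stdNormalPDF_pos (t : ℝ) : 0 < stdNormalPDF t := by
  unfold stdNormalPDF
  positivity

theorem stdNormalPDF_neg (t : ℝ) : stdNormalPDF (-t) = stdNormalPDF t := by
  simp [stdNormalPDF]

theorem continuous_stdNormalPDF : Continuous stdNormalPDF := by
  unfold stdNormalPDF
  fun_prop

theorem integrable_stdNormalPDF : Integrable stdNormalPDF :=
  stdNormalPDF_eq_gaussianPDFReal ▸ integrable_gaussianPDFReal 0 1

theorem hasDerivAt_stdNormalPDF (t : ℝ) : HasDerivAt stdNormalPDF (-t * stdNormalPDF t) t := by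
  have hexp : HasDerivAt (fun x : ℝ => Real.exp (-x ^ 2 / 2)) (Real.exp (-t ^ 2 / 2) * -t) t := by
    refine ((hasDerivAt_pow 2 t).neg.div_const 2).exp.congr_deriv ?_
    simp only [Pi.neg_apply]
    ring
  refine (hexp.const_mul (Real.sqrt (2 * Real.pi))⁻¹).congr_deriv ?_
  unfold stdNormalPDF
  ring

theorem hasDerivAt_stdNormalCDF (x : ℝ) : HasDerivAt stdNormalCDF (stdNormalPDF x) x :=
  hasDerivAt_integral_Iic integrable_stdNormalPDF continuous_stdNormalPDF.continuousAt

theorem hasDerivAt_stdNormalCDF_neg (x : ℝ) :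
    HasDerivAt (fun y => stdNormalCDF (-y)) (-stdNormalPDF x) x := by
  simpa [stdNormalPDF_neg, Function.comp_def] using
    (hasDerivAt_stdNormalCDF (-x)).comp x (hasDerivAt_neg x)

/-- Proposition 2: the derivative of the estimated optimal acceptance
threshold α̂₀ with respect to ρ. -/
theorem hasDerivAt_optThreshold (ρ : ℝ) (p q f : ℝ)
    (hp : p = stdNormalCDF ρ) (hq : q = stdNormalCDF (-ρ)) (hf : f = stdNormalPDF ρ) :
    HasDerivAt optThreshold (((f + p * ρ) * (f - q * ρ) - q * p) / f) ρ := by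
  subst hp hq hf
  have hratio := ((hasDerivAt_id ρ).mul (hasDerivAt_stdNormalCDF_neg ρ)).div
    (hasDerivAt_stdNormalPDF ρ) (stdNormalPDF_pos ρ).ne'
  refine ((hasDerivAt_stdNormalCDF ρ).mul (hratio.const_sub 1)).congr_deriv ?_
  simp only [Pi.mul_apply, Pi.div_apply, id]
  field_simp [(stdNormalPDF_pos ρ).ne']
  ring
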